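/- Consider a Blackwell game (with finitely many players, finite action sets, and bounded Borel-measurable payoff functions). For every player i ∈ I and every δ > 0, player i has a subgame-perfect δ-maxmin strategy, i.e., a strategy σ_i^δ such that E_{(σ_i^δ, σ_{-i})}[f_i | h] ≥ v_i(h) − δ for every history h ∈ H and every strategy profile σ_{-i} of player i's opponents. -/

import Mathlib

/-!
Fix, in every subgame `l`, a strategy `ρ l` that guarantees the maxmin value `v l` up to `ε`.
The glued strategy plays `ρ b`, where `b` is the last restart point, and restarts (switches to
`ρ l`) at the first history `l` at which `ρ b` no longer guarantees `v l - 2ε`.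

Let `G` be the infimum over all histories `l` of the amount by which the glued strategy
guarantees more at `l` than `ρ (last restart before l)` does. Split the play after `l` at the
next restart points `l ++ r` and let the opponents switch there to replies that nearly punish
`ρ b`: at such a point the glued strategy guarantees at least `G + v - ε`, while the punished
`ρ b` gets less than `v - 2ε + ε / 2`. Hence the amount at `l` is at least `min 0 (G + ε / 2)`,
so `G ≥ min 0 (G + ε / 2)`, which forces `G ≥ 0`. Thus the glued strategy guarantees
`v l - 2ε` in every subgame.
-/

open MeasureTheory

namespace Blackwell

/-- The set of plays: infinite streams of action profiles. -/
abbrev Play {ι : Type*} (Ac : ι → Type*) : Type _ := ℕ → ∀ j, Ac j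

/-- A behavior strategy of player `i`: a mixed action after every finite history.
A history of length `t` is encoded by the first `t` coordinates of a play, and the
strategy is required to depend only on these coordinates. -/
structure Strategy {ι : Type*} (Ac : ι → Type*) (i : ι) where
  act : ℕ → Play Ac → PMF (Ac i)
  depends_on_past : ∀ (t : ℕ) (p q : Play Ac), (∀ s, s < t → p s = q s) → act t p = act t q

/-- A strategy profile: a behavior strategy for every player. -/
abbrev Profile {ι : Type*} (Ac : ι → Type*) : Type _ := ∀ i, Strategy Ac i

/-- The assignment, to each strategy profile `σ`, of the induced (Ionescu–Tulcea)
probability measure `P_σ` on the set of plays; it is uniquely characterized by the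
probabilities it assigns to cylinder sets. -/
structure PlayMeasure {ι : Type*} [Fintype ι] (Ac : ι → Type*)
    [∀ i, MeasurableSpace (Ac i)] where
  μ : Profile Ac → Measure (Play Ac)
  isProb : ∀ σ, IsProbabilityMeasure (μ σ)
  cyl : ∀ (σ : Profile Ac) (n : ℕ) (p : Play Ac),
    μ σ {q | ∀ t, t < n → q t = p t}
      = ∏ t ∈ Finset.range n, ∏ i, ((σ i).act t p) (p t i)

variable {ι : Type*} [Fintype ι] [DecidableEq ι] [Nonempty ι]
  {Ac : ι → Type*} [∀ i, Fintype (Ac i)] [∀ i, Nonempty (Ac i)]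
  [∀ i, MeasurableSpace (Ac i)] [∀ i, DiscreteMeasurableSpace (Ac i)]

/-- The expected payoff `E_σ[f]` of a strategy profile `σ` for payoff function `f`. -/
noncomputable def expPay (PM : PlayMeasure Ac) (σ : Profile Ac) (f : Play Ac → ℝ) : ℝ :=
  ∫ p, f p ∂(PM.μ σ)

/-- Concatenation of the history given by the first `n` coordinates of `h` with the play `q`. -/
def splice (n : ℕ) (h q : Play Ac) : Play Ac := fun t => if t < n then h t else q (t - n)

/-- The continuation of a strategy in the subgame that starts at the history
given by the first `n` coordinates of `h`. -/
def Strategy.shift {i : ι} (σi : Strategy Ac i) (n : ℕ) (h : Play Ac) : Strategy Ac i where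
  act t q := σi.act (n + t) (splice n h q)
  depends_on_past := by
    intro t p q hpq
    refine σi.depends_on_past _ _ _ ?_
    intro s hs
    simp only [splice]
    by_cases hsn : s < n
    · simp [hsn]
    · simp only [if_neg hsn]
      exact hpq (s - n) (by omega)

/-- The expected payoff `E_σ[f ∣ h]` in the subgame that starts at the history
given by the first `n` coordinates of `h`. -/
noncomputable def subExp (PM : PlayMeasure Ac) (σ : Profile Ac) (f : Play Ac → ℝ)
    (n : ℕ) (h : Play Ac) : ℝ :=
  ∫ q, f (splice n h q) ∂(PM.μ (fun i => (σ i).shift n h))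

/-- The minmax value of player `i`. -/
noncomputable def minmax (PM : PlayMeasure Ac) (f : Play Ac → ℝ) (i : ι) : ℝ :=
  ⨅ τ : Profile Ac, ⨆ σi : Strategy Ac i, expPay PM (Function.update τ i σi) f

/-- The maxmin value of player `i`. -/
noncomputable def maxmin (PM : PlayMeasure Ac) (f : Play Ac → ℝ) (i : ι) : ℝ :=
  ⨆ σi : Strategy Ac i, ⨅ τ : Profile Ac, expPay PM (Function.update τ i σi) f

/-- The minmax value of player `i` in the subgame that starts at the history
given by the first `n` coordinates of `h`. -/
noncomputable def subMinmax (PM : PlayMeasure Ac) (f : Play Ac → ℝ) (i : ι)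
    (n : ℕ) (h : Play Ac) : ℝ :=
  ⨅ τ : Profile Ac, ⨆ σi : Strategy Ac i, subExp PM (Function.update τ i σi) f n h

/-- The maxmin value of player `i` in the subgame that starts at the history
given by the first `n` coordinates of `h`. -/
noncomputable def subMaxmin (PM : PlayMeasure Ac) (f : Play Ac → ℝ) (i : ι)
    (n : ℕ) (h : Play Ac) : ℝ :=
  ⨆ σi : Strategy Ac i, ⨅ τ : Profile Ac, subExp PM (Function.update τ i σi) f n h

/-- A strategy profile `σ` is an `ε`-equilibrium if no player can gain more than `ε`
by a unilateral deviation. -/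
def IsEpsEquilibrium (PM : PlayMeasure Ac) (f : ι → Play Ac → ℝ) (ε : ℝ)
    (σ : Profile Ac) : Prop :=
  ∀ (i : ι) (σi : Strategy Ac i),
    expPay PM (Function.update σ i σi) (f i) ≤ expPay PM σ (f i) + ε

/-- A payoff function is tail-measurable if changing finitely many coordinates of the
play does not change its value. -/
def TailMeasurable (f : Play Ac → ℝ) : Prop :=
  ∀ p q : Play Ac, (∃ N, ∀ t, N ≤ t → p t = q t) → f p = f q

/-- A payoff function is bounded. -/
def BddPayoff (f : Play Ac → ℝ) : Prop := ∃ C, ∀ p, |f p| ≤ C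

open Function Set

lemma min_zero_le_tsum_mul {κ : Type*} {c x : κ → ℝ} (hc : ∀ k, 0 ≤ c k) (hcs : Summable c)
    (hc1 : ∑' k, c k ≤ 1) {A : ℝ} (hA : ∀ k, A ≤ x k) (hcx : Summable fun k => c k * x k) :
    min 0 A ≤ ∑' k, c k * x k := by
  rcases le_total 0 A with h | h
  · exact (min_le_left _ _).trans
      (tsum_nonneg fun k => mul_nonneg (hc k) (h.trans (hA k)))
  · have hc0 : 0 ≤ ∑' k, c k := tsum_nonneg hc
    calc min 0 A ≤ (∑' k, c k) * A := by
          rw [min_eq_right h]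
          nlinarith
      _ = ∑' k, c k * A := tsum_mul_right.symm
      _ ≤ ∑' k, c k * x k :=
          (hcs.mul_right A).tsum_le_tsum (fun k => mul_le_mul_of_nonneg_left (hA k) (hc k)) hcx

section Continuations

omit [Fintype ι] [DecidableEq ι] [Nonempty ι] [∀ i, Fintype (Ac i)] [∀ i, Nonempty (Ac i)]
  [∀ i, MeasurableSpace (Ac i)] [∀ i, DiscreteMeasurableSpace (Ac i)]

lemma splice_of_lt {n t : ℕ} (ht : t < n) (h q : Play Ac) : splice n h q t = h t := if_pos ht

lemma splice_of_le {n t : ℕ} (ht : n ≤ t) (h q : Play Ac) : splice n h q t = q (t - n) :=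
  if_neg ht.not_gt

lemma splice_congr {n : ℕ} {h h' : Play Ac} (hh : ∀ s < n, h s = h' s) (q : Play Ac) :
    splice n h q = splice n h' q := by
  funext t
  rcases lt_or_ge t n with ht | ht
  · rw [splice_of_lt ht, splice_of_lt ht, hh t ht]
  · rw [splice_of_le ht, splice_of_le ht]

lemma Strategy.ext {i : ι} {σ τ : Strategy Ac i} (h : σ.act = τ.act) : σ = τ := by
  cases σ; cases τ; cases h; rfl

lemma Strategy.shift_congr {i : ι} (σ : Strategy Ac i) {n : ℕ} {h h' : Play Ac}
    (hh : ∀ s < n, h s = h' s) : σ.shift n h = σ.shift n h' :=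
  Strategy.ext <| funext fun t => funext fun q => by
    simp only [Strategy.shift, splice_congr hh]

end Continuations

/-- The head of a history is the action profile played at time `0`. -/
abbrev History (Ac : ι → Type*) : Type _ := List (∀ j, Ac j)

section Histories

omit [Fintype ι] [DecidableEq ι] [Nonempty ι] [∀ i, Fintype (Ac i)] [∀ i, Nonempty (Ac i)]
  [∀ i, MeasurableSpace (Ac i)] [∀ i, DiscreteMeasurableSpace (Ac i)]

def histOf (t : ℕ) (p : Play Ac) : History Ac := (List.range t).map p

@[simp] lemma length_histOf (t : ℕ) (p : Play Ac) : (histOf t p).length = t := by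
  simp [histOf]

@[simp] lemma getElem_histOf {t s : ℕ} (p : Play Ac) (hs : s < (histOf t p).length) :
    (histOf t p)[s] = p s := by
  simp [histOf]

lemma histOf_congr {t : ℕ} {p q : Play Ac} (h : ∀ s < t, p s = q s) :
    histOf t p = histOf t q :=
  List.ext_getElem (by simp) fun s hs _ => by simpa using h s (by simpa using hs)

lemma histOf_prefix_histOf {a b : ℕ} (hab : a ≤ b) (p : Play Ac) :
    histOf a p <+: histOf b p := by
  rw [List.prefix_iff_eq_take]
  exact List.ext_getElem (by simp [hab]) fun _ _ _ => by simp

end Histories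

section PlaysOfHistories

omit [Fintype ι] [DecidableEq ι] [Nonempty ι] [∀ i, Fintype (Ac i)]
  [∀ i, MeasurableSpace (Ac i)] [∀ i, DiscreteMeasurableSpace (Ac i)]

/-- The coordinates of `toPlay l` beyond the length of `l` are arbitrary. -/
noncomputable def toPlay (l : History Ac) : Play Ac := fun t => l.getD t (Classical.arbitrary _)

noncomputable def prepend (l : History Ac) (q : Play Ac) : Play Ac := splice l.length (toPlay l) q

lemma toPlay_of_lt {l : History Ac} {t : ℕ} (ht : t < l.length) : toPlay l t = l[t] := by
  simp [toPlay, ht]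

lemma toPlay_histOf {t s : ℕ} (hs : s < t) (p : Play Ac) : toPlay (histOf t p) s = p s := by
  rw [toPlay_of_lt (by simpa using hs), getElem_histOf]

lemma histOf_toPlay (l : History Ac) {t : ℕ} (ht : t ≤ l.length) :
    histOf t (toPlay l) = l.take t :=
  List.ext_getElem (by simp [ht]) fun s h₁ _ => by
    rw [getElem_histOf, toPlay_of_lt (by simp at h₁; omega), List.getElem_take]

lemma prepend_toPlay (l r : History Ac) : prepend l (toPlay r) = toPlay (l ++ r) := by
  funext t
  rcases lt_or_ge t l.length with ht | ht
  · simp only [prepend, splice_of_lt ht, toPlay]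
    rw [List.getD_append _ _ _ _ ht]
  · simp only [prepend, splice_of_le ht, toPlay]
    rw [List.getD_append_right _ _ _ _ ht]

lemma prepend_length_add (l : History Ac) (q : Play Ac) (t : ℕ) :
    prepend l q (l.length + t) = q t := by
  rw [prepend, splice_of_le (Nat.le_add_right _ _), Nat.add_sub_cancel_left]

lemma histOf_prepend (l : History Ac) (t : ℕ) (q : Play Ac) :
    histOf (l.length + t) (prepend l q) = l ++ histOf t q := by
  refine List.ext_getElem (by simp) fun s h₁ _ => ?_
  rw [getElem_histOf]
  rcases lt_or_ge s l.length with hs | hs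
  · rw [prepend, splice_of_lt hs, toPlay_of_lt hs, List.getElem_append_left hs]
  · obtain ⟨s, rfl⟩ := Nat.exists_eq_add_of_le hs
    rw [prepend_length_add, List.getElem_append_right (by omega), getElem_histOf]
    congr 1
    omega

lemma prepend_prepend (l r : History Ac) (q : Play Ac) :
    prepend l (prepend r q) = prepend (l ++ r) q := by
  funext t
  rcases lt_or_ge t (l ++ r).length with ht | ht
  · rw [show prepend (l ++ r) q t = toPlay (l ++ r) t from splice_of_lt ht _ _,
      ← prepend_toPlay l r]
    rcases lt_or_ge t l.length with htl | htl
    · exact (splice_of_lt htl _ _).trans (splice_of_lt htl _ _).symm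
    · obtain ⟨s, rfl⟩ := Nat.exists_eq_add_of_le htl
      rw [prepend_length_add, prepend_length_add, prepend,
        splice_of_lt (by simp only [List.length_append] at ht; omega)]
  · obtain ⟨s, rfl⟩ := Nat.exists_eq_add_of_le ht
    rw [prepend_length_add, List.length_append, Nat.add_assoc, prepend_length_add,
      prepend_length_add]

variable {i : ι}

noncomputable def Strategy.after (σ : Strategy Ac i) (l : History Ac) : Strategy Ac i :=
  σ.shift l.length (toPlay l)

noncomputable def Profile.after (π : Profile Ac) (l : History Ac) : Profile Ac :=
  fun j => (π j).after l

@[simp] lemma Profile.after_apply (π : Profile Ac) (l : History Ac) (j : ι) :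
    π.after l j = (π j).after l := rfl

lemma Strategy.after_act (σ : Strategy Ac i) (l : History Ac) (t : ℕ) (q : Play Ac) :
    (σ.after l).act t q = σ.act (l.length + t) (prepend l q) := rfl

lemma Strategy.after_after (σ : Strategy Ac i) (l r : History Ac) :
    (σ.after l).after r = σ.after (l ++ r) :=
  Strategy.ext <| funext fun t => funext fun q => by
    simp only [Strategy.after_act, prepend_prepend, List.length_append, Nat.add_assoc]

lemma Profile.after_after (π : Profile Ac) (l r : History Ac) :
    (π.after l).after r = π.after (l ++ r) :=
  funext fun j => (π j).after_after l r

lemma Profile.after_update [DecidableEq ι] (τ : Profile Ac) (σ : Strategy Ac i) (l : History Ac) :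
    Profile.after (update τ i σ) l = update (τ.after l) i (σ.after l) :=
  funext fun j => by
    by_cases hj : j = i
    · subst hj; simp [Profile.after]
    · simp [Profile.after, hj]

instance (j : ι) : Nonempty (Strategy Ac j) :=
  ⟨⟨fun _ _ => PMF.pure (Classical.arbitrary _), fun _ _ _ _ => rfl⟩⟩

end PlaysOfHistories

section Cylinders

omit [Fintype ι] [DecidableEq ι] [Nonempty ι] [∀ i, Fintype (Ac i)]
  [∀ i, MeasurableSpace (Ac i)] [∀ i, DiscreteMeasurableSpace (Ac i)]

def cylinder (l : History Ac) : Set (Play Ac) := {q | ∀ t < l.length, q t = toPlay l t}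

lemma mem_cylinder_iff_histOf {l : History Ac} {q : Play Ac} :
    q ∈ cylinder l ↔ histOf l.length q = l := by
  refine ⟨fun hq => ?_, fun hq t ht => ?_⟩
  · rw [histOf_congr hq, histOf_toPlay l le_rfl, List.take_length]
  · rw [← hq, toPlay_histOf ht]

@[simp] lemma cylinder_nil : cylinder ([] : History Ac) = univ :=
  eq_univ_of_forall fun _ t ht => absurd ht (Nat.not_lt_zero t)

lemma cylinder_anti {l m : History Ac} (h : l <+: m) : cylinder m ⊆ cylinder l := by
  intro q hq t ht
  rw [hq t (ht.trans_le h.length_le), toPlay_of_lt ht, toPlay_of_lt (ht.trans_le h.length_le),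
    h.getElem]

lemma prefix_or_prefix_of_mem_cylinder {l m : History Ac} {q : Play Ac} (hl : q ∈ cylinder l)
    (hm : q ∈ cylinder m) : l <+: m ∨ m <+: l := by
  rw [mem_cylinder_iff_histOf] at hl hm
  rw [← hl, ← hm]
  rcases le_total l.length m.length with h | h
  · exact .inl (histOf_prefix_histOf h q)
  · exact .inr (histOf_prefix_histOf h q)

lemma disjoint_cylinder {l m : History Ac} (hlm : ¬ l <+: m) (hml : ¬ m <+: l) :
    Disjoint (cylinder l) (cylinder m) :=
  Set.disjoint_left.2 fun _ hl hm => (prefix_or_prefix_of_mem_cylinder hl hm).elim hlm hml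

lemma prepend_mem_cylinder (l : History Ac) (q : Play Ac) : prepend l q ∈ cylinder l :=
  fun _ ht => splice_of_lt ht _ _

lemma prepend_preimage_cylinder_append (l r : History Ac) :
    prepend l ⁻¹' cylinder (l ++ r) = cylinder r := by
  ext q
  simp only [mem_preimage, mem_cylinder_iff_histOf, List.length_append, histOf_prepend,
    List.append_cancel_left_eq]

lemma prepend_preimage_cylinder_of_prefix {l m : History Ac} (h : m <+: l) :
    prepend l ⁻¹' cylinder m = univ :=
  eq_univ_of_forall fun q => cylinder_anti h (prepend_mem_cylinder l q)

lemma prepend_preimage_cylinder_of_not_prefix {l m : History Ac} (hlm : ¬ l <+: m)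
    (hml : ¬ m <+: l) : prepend l ⁻¹' cylinder m = ∅ :=
  eq_empty_of_forall_notMem fun q hq =>
    (disjoint_cylinder hlm hml).notMem_of_mem_left (prepend_mem_cylinder l q) hq

lemma isPiSystem_cylinder : IsPiSystem (range (cylinder (Ac := Ac))) := by
  rintro _ ⟨l, rfl⟩ _ ⟨m, rfl⟩ ⟨q, hl, hm⟩
  rcases prefix_or_prefix_of_mem_cylinder hl hm with h | h
  · exact ⟨m, (inter_eq_right.2 (cylinder_anti h)).symm⟩
  · exact ⟨l, (inter_eq_left.2 (cylinder_anti h)).symm⟩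

end Cylinders

section Subgames

omit [DecidableEq ι] [Nonempty ι] [∀ i, Fintype (Ac i)] [∀ i, DiscreteMeasurableSpace (Ac i)]

instance (PM : PlayMeasure Ac) (σ : Profile Ac) : IsProbabilityMeasure (PM.μ σ) := PM.isProb σ

omit [Fintype ι] in
lemma measurable_prepend (l : History Ac) : Measurable (prepend l) :=
  measurable_pi_lambda _ fun t => by
    rcases lt_or_ge t l.length with ht | ht
    · simp only [prepend, splice_of_lt ht]
      exact measurable_const
    · simp only [prepend, splice_of_le ht]
      exact measurable_pi_apply (t - l.length)

lemma measure_cylinder (PM : PlayMeasure Ac) (π : Profile Ac) (l : History Ac) :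
    PM.μ π (cylinder l) = ∏ t ∈ Finset.range l.length, ∏ j, (π j).act t (toPlay l) (toPlay l t j) :=
  PM.cyl π l.length (toPlay l)

lemma measure_cylinder_append (PM : PlayMeasure Ac) (π : Profile Ac) (l r : History Ac) :
    PM.μ π (cylinder (l ++ r)) = PM.μ π (cylinder l) * PM.μ (π.after l) (cylinder r) := by
  rw [measure_cylinder, measure_cylinder, measure_cylinder, List.length_append,
    Finset.prod_range_add]
  congr 1
  · refine Finset.prod_congr rfl fun t ht => Finset.prod_congr rfl fun j _ => ?_
    have hagree : ∀ s < l.length, toPlay (l ++ r) s = toPlay l s := fun s hs => by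
      rw [toPlay_of_lt hs, toPlay_of_lt (by simp; omega), List.getElem_append_left]
    rw [(π j).depends_on_past t _ _ fun s hs => hagree s (hs.trans (Finset.mem_range.1 ht)),
      hagree t (Finset.mem_range.1 ht)]
  · refine Finset.prod_congr rfl fun t _ => Finset.prod_congr rfl fun j _ => ?_
    rw [← prepend_toPlay, prepend_length_add]
    rfl

noncomputable def subExpAt (PM : PlayMeasure Ac) (σ : Profile Ac) (g : Play Ac → ℝ)
    (l : History Ac) : ℝ :=
  subExp PM σ g l.length (toPlay l)

omit [∀ i, Nonempty (Ac i)] in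
lemma subExp_congr (PM : PlayMeasure Ac) (σ : Profile Ac) (g : Play Ac → ℝ) {n : ℕ}
    {h h' : Play Ac} (hh : ∀ s < n, h s = h' s) : subExp PM σ g n h = subExp PM σ g n h' := by
  have hσ : ∀ j, (σ j).shift n h = (σ j).shift n h' := fun j => (σ j).shift_congr hh
  simp only [subExp, hσ, splice_congr hh]

lemma subExp_eq_subExpAt_histOf (PM : PlayMeasure Ac) (σ : Profile Ac) (g : Play Ac → ℝ)
    (n : ℕ) (h : Play Ac) : subExp PM σ g n h = subExpAt PM σ g (histOf n h) := by
  rw [subExpAt, length_histOf]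
  exact subExp_congr PM σ g fun s hs => (toPlay_histOf hs h).symm

lemma subExpAt_eq_integral (PM : PlayMeasure Ac) (σ : Profile Ac) (g : Play Ac → ℝ)
    (l : History Ac) : subExpAt PM σ g l = ∫ q, g (prepend l q) ∂PM.μ (σ.after l) := rfl

lemma subExpAt_after (PM : PlayMeasure Ac) (σ : Profile Ac) (g : Play Ac → ℝ)
    (l r : History Ac) : subExpAt PM (σ.after l) (g ∘ prepend l) r = subExpAt PM σ g (l ++ r) := by
  simp only [subExpAt_eq_integral, Profile.after_after, comp_apply, prepend_prepend]

lemma abs_subExpAt_le (PM : PlayMeasure Ac) (σ : Profile Ac) {g : Play Ac → ℝ} {C : ℝ}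
    (hC : ∀ p, |g p| ≤ C) (l : History Ac) : |subExpAt PM σ g l| ≤ C := by
  rw [subExpAt_eq_integral]
  simpa using norm_integral_le_of_norm_le_const (μ := PM.μ (σ.after l))
    (.of_forall fun q => (Real.norm_eq_abs _).trans_le (hC (prepend l q)))

end Subgames

section CylinderSigmaAlgebra

omit [DecidableEq ι] [Nonempty ι]

lemma measurableSet_cylinder (l : History Ac) : MeasurableSet (cylinder l) := by
  have : cylinder l = ⋂ t : Fin l.length, (fun q : Play Ac => q t) ⁻¹' {toPlay l t} := by
    ext q
    simp [cylinder, Fin.forall_iff]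
  rw [this]
  exact .iInter fun t => measurable_pi_apply _ (measurableSet_singleton _)

lemma measurableSpace_eq_generateFrom_cylinder :
    (inferInstance : MeasurableSpace (Play Ac)) = .generateFrom (range cylinder) := by
  refine le_antisymm (iSup_le fun t => ?_) (MeasurableSpace.generateFrom_le ?_)
  · rintro _ ⟨S, -, rfl⟩
    have : (fun q : Play Ac => q t) ⁻¹' S
        = ⋃ (l : History Ac) (_ : l.length = t + 1 ∧ toPlay l t ∈ S), cylinder l := by
      ext q
      simp only [mem_preimage, mem_iUnion, exists_prop]
      refine ⟨fun hq => ⟨histOf (t + 1) q, by simpa [toPlay_histOf] using hq,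
        mem_cylinder_iff_histOf.2 (by simp)⟩, ?_⟩
      rintro ⟨l, ⟨hl, hS⟩, hq⟩
      rwa [hq t (by omega)]
    rw [this]
    exact .iUnion fun l => .iUnion fun _ => MeasurableSpace.measurableSet_generateFrom ⟨l, rfl⟩
  · rintro _ ⟨l, rfl⟩
    exact measurableSet_cylinder l

lemma ext_of_cylinder {μ ν : Measure (Play Ac)} [IsFiniteMeasure μ]
    (h : ∀ l, μ (cylinder l) = ν (cylinder l)) : μ = ν :=
  ext_of_generate_finite _ measurableSpace_eq_generateFrom_cylinder isPiSystem_cylinder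
    (by rintro _ ⟨l, rfl⟩; exact h l) (by simpa only [cylinder_nil] using h [])

lemma restrict_cylinder (PM : PlayMeasure Ac) (π : Profile Ac) (l : History Ac) :
    (PM.μ π).restrict (cylinder l)
      = PM.μ π (cylinder l) • (PM.μ (π.after l)).map (prepend l) := by
  refine ext_of_cylinder fun m => ?_
  rw [Measure.restrict_apply (measurableSet_cylinder m), Measure.smul_apply, smul_eq_mul,
    Measure.map_apply (measurable_prepend l) (measurableSet_cylinder m)]
  by_cases hml : m <+: l
  · rw [inter_eq_right.2 (cylinder_anti hml), prepend_preimage_cylinder_of_prefix hml,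
      measure_univ, mul_one]
  by_cases hlm : l <+: m
  · rw [inter_eq_left.2 (cylinder_anti hlm)]
    obtain ⟨r, rfl⟩ := hlm
    rw [prepend_preimage_cylinder_append, measure_cylinder_append]
  · rw [(disjoint_cylinder hml hlm).inter_eq, prepend_preimage_cylinder_of_not_prefix hlm hml,
      measure_empty, measure_empty, mul_zero]

lemma setIntegral_cylinder (PM : PlayMeasure Ac) (π : Profile Ac) {g : Play Ac → ℝ}
    (hg : Measurable g) (l : History Ac) :
    ∫ q in cylinder l, g q ∂PM.μ π = (PM.μ π).real (cylinder l) * subExpAt PM π g l := by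
  rw [restrict_cylinder, integral_smul_measure,
    integral_map (measurable_prepend l).aemeasurable hg.aestronglyMeasurable, smul_eq_mul,
    measureReal_def, subExpAt_eq_integral]

end CylinderSigmaAlgebra

section Antichains

omit [DecidableEq ι] [Nonempty ι]

variable {R : Set (History Ac)}

def Strategy.AgreeBefore {i : ι} (R : Set (History Ac)) (σ σ' : Strategy Ac i) : Prop :=
  ∀ t q, (∀ r ∈ R, ¬ r <+: histOf t q) → σ.act t q = σ'.act t q

omit [Fintype ι] [∀ i, Fintype (Ac i)] [∀ i, MeasurableSpace (Ac i)]
  [∀ i, DiscreteMeasurableSpace (Ac i)] in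
lemma pairwise_disjoint_cylinder (hR : IsAntichain (· <+: ·) R) :
    Pairwise (Disjoint on fun r : R => cylinder (r : History Ac)) := fun r r' hne =>
  disjoint_cylinder (hR r.2 r'.2 (Subtype.coe_ne_coe.2 hne))
    (hR r'.2 r.2 (Subtype.coe_ne_coe.2 hne.symm))

lemma measure_iUnion_cylinder (PM : PlayMeasure Ac) (π : Profile Ac)
    (hR : IsAntichain (· <+: ·) R) :
    PM.μ π (⋃ r : R, cylinder (r : History Ac)) = ∑' r : R, PM.μ π (cylinder r) :=
  measure_iUnion (pairwise_disjoint_cylinder hR) fun _ => measurableSet_cylinder _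

lemma summable_measureReal_cylinder (PM : PlayMeasure Ac) (π : Profile Ac)
    (hR : IsAntichain (· <+: ·) R) :
    Summable fun r : R => (PM.μ π).real (cylinder r) :=
  ENNReal.summable_toReal (by rw [← measure_iUnion_cylinder PM π hR]; exact measure_ne_top _ _)

lemma tsum_measureReal_cylinder_le_one (PM : PlayMeasure Ac) (π : Profile Ac)
    (hR : IsAntichain (· <+: ·) R) :
    ∑' r : R, (PM.μ π).real (cylinder r) ≤ 1 := by
  simp only [measureReal_def]
  rw [← ENNReal.tsum_toReal_eq fun _ => measure_ne_top _ _, ← measure_iUnion_cylinder PM π hR]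
  exact measureReal_le_one

lemma summable_measureReal_cylinder_mul (PM : PlayMeasure Ac) (π : Profile Ac)
    (hR : IsAntichain (· <+: ·) R) {x : R → ℝ} {C : ℝ} (hx : ∀ r, |x r| ≤ C) :
    Summable fun r : R => (PM.μ π).real (cylinder r) * x r :=
  ((summable_measureReal_cylinder PM π hR).mul_right C).of_norm_bounded fun r => by
    rw [norm_mul, Real.norm_of_nonneg measureReal_nonneg, Real.norm_eq_abs]
    exact mul_le_mul_of_nonneg_left (hx r) measureReal_nonneg

lemma integral_eq_setIntegral_compl_add_tsum (PM : PlayMeasure Ac) (π : Profile Ac)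
    (hR : IsAntichain (· <+: ·) R) {g : Play Ac → ℝ} (hg : Measurable g) {C : ℝ}
    (hC : ∀ p, |g p| ≤ C) :
    ∫ q, g q ∂PM.μ π = ∫ q in (⋃ r : R, cylinder (r : History Ac))ᶜ, g q ∂PM.μ π
      + ∑' r : R, (PM.μ π).real (cylinder r) * subExpAt PM π g r := by
  have hint : Integrable g (PM.μ π) :=
    .of_bound hg.aestronglyMeasurable C (.of_forall fun p => (Real.norm_eq_abs _).trans_le (hC p))
  rw [← integral_add_compl (MeasurableSet.iUnion fun r : R => measurableSet_cylinder r) hint,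
    add_comm, integral_iUnion (fun _ => measurableSet_cylinder _) (pairwise_disjoint_cylinder hR)
      hint.integrableOn]
  simp only [setIntegral_cylinder PM π hg]

omit [∀ i, Fintype (Ac i)] [∀ i, DiscreteMeasurableSpace (Ac i)] in
lemma measure_cylinder_eq_of_agreeBefore (PM : PlayMeasure Ac) {π π' : Profile Ac}
    (h : ∀ j, (π j).AgreeBefore R (π' j)) {m : History Ac} (hm : ∀ r ∈ R, r <+: m → r = m) :
    PM.μ π (cylinder m) = PM.μ π' (cylinder m) := by
  rw [measure_cylinder, measure_cylinder]
  refine Finset.prod_congr rfl fun t ht => Finset.prod_congr rfl fun j _ => ?_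
  have ht : t < m.length := Finset.mem_range.1 ht
  rw [h j t _ fun r hr hrt => ?_]
  rw [histOf_toPlay m ht.le, List.prefix_take_iff] at hrt
  have := hm r hr hrt.1
  subst this
  exact absurd hrt.2 ht.not_ge

lemma measure_cylinder_inter_iUnion_eq (PM : PlayMeasure Ac) {π π' : Profile Ac}
    (h : ∀ j, (π j).AgreeBefore R (π' j)) (hR : IsAntichain (· <+: ·) R) {m : History Ac}
    (hm : ∀ r ∈ R, ¬ r <+: m) :
    PM.μ π (cylinder m ∩ ⋃ r : R, cylinder (r : History Ac))
      = PM.μ π' (cylinder m ∩ ⋃ r : R, cylinder (r : History Ac)) := by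
  have hsum : ∀ σ : Profile Ac, PM.μ σ (cylinder m ∩ ⋃ r : R, cylinder (r : History Ac))
      = ∑' r : R, PM.μ σ (cylinder m ∩ cylinder r) := fun σ => by
    rw [inter_iUnion]
    exact measure_iUnion
      (fun _ _ hne =>
        (pairwise_disjoint_cylinder hR hne).mono inter_subset_right inter_subset_right)
      fun r => (measurableSet_cylinder m).inter (measurableSet_cylinder (r : History Ac))
  rw [hsum, hsum]
  refine tsum_congr fun r => ?_
  by_cases hmr : m <+: r
  · rw [inter_eq_right.2 (cylinder_anti hmr)]
    exact measure_cylinder_eq_of_agreeBefore PM h fun r' hr' hr'r => hR.eq hr' r.2 hr'r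
  · rw [(disjoint_cylinder hmr (hm r r.2)).inter_eq, measure_empty, measure_empty]

lemma restrict_compl_iUnion_cylinder_eq (PM : PlayMeasure Ac) {π π' : Profile Ac}
    (h : ∀ j, (π j).AgreeBefore R (π' j)) (hR : IsAntichain (· <+: ·) R) :
    (PM.μ π).restrict (⋃ r : R, cylinder (r : History Ac))ᶜ
      = (PM.μ π').restrict (⋃ r : R, cylinder (r : History Ac))ᶜ := by
  set U := ⋃ r : R, cylinder (r : History Ac)
  have hU : MeasurableSet U := .iUnion fun _ => measurableSet_cylinder _
  refine ext_of_cylinder fun m => ?_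
  rw [Measure.restrict_apply (measurableSet_cylinder m),
    Measure.restrict_apply (measurableSet_cylinder m)]
  by_cases hm : ∃ r ∈ R, r <+: m
  · obtain ⟨r, hr, hrm⟩ := hm
    have hmU : cylinder m ⊆ U := (cylinder_anti hrm).trans (subset_iUnion_of_subset ⟨r, hr⟩ le_rfl)
    rw [← sdiff_eq, sdiff_eq_empty.2 hmU, measure_empty, measure_empty]
  · simp only [not_exists, not_and] at hm
    have hcompl : ∀ σ : Profile Ac,
        PM.μ σ (cylinder m ∩ Uᶜ) = PM.μ σ (cylinder m) - PM.μ σ (cylinder m ∩ U) := fun σ =>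
      ENNReal.eq_sub_of_add_eq (measure_ne_top _ _) <| by
        rw [← sdiff_eq, add_comm, measure_inter_add_sdiff _ hU]
    rw [hcompl, hcompl, measure_cylinder_inter_iUnion_eq PM h hR hm,
      measure_cylinder_eq_of_agreeBefore PM h fun r hr hrm => absurd hrm (hm r hr)]

lemma integral_sub_integral_eq_tsum (PM : PlayMeasure Ac) {π π' : Profile Ac}
    (h : ∀ j, (π j).AgreeBefore R (π' j)) (hR : IsAntichain (· <+: ·) R) {g : Play Ac → ℝ}
    (hg : Measurable g) {C : ℝ} (hC : ∀ p, |g p| ≤ C) :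
    ∫ q, g q ∂PM.μ π - ∫ q, g q ∂PM.μ π'
      = ∑' r : R, (PM.μ π).real (cylinder r) * (subExpAt PM π g r - subExpAt PM π' g r) := by
  have hcoeff : ∀ r : R, (PM.μ π').real (cylinder r) = (PM.μ π).real (cylinder r) := fun r => by
    rw [measureReal_def, measureReal_def,
      measure_cylinder_eq_of_agreeBefore PM h fun r' hr' hr'r => hR.eq hr' r.2 hr'r]
  rw [integral_eq_setIntegral_compl_add_tsum PM π hR hg hC,
    integral_eq_setIntegral_compl_add_tsum PM π' hR hg hC,
    restrict_compl_iUnion_cylinder_eq PM h hR]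
  simp only [hcoeff, mul_sub]
  rw [(summable_measureReal_cylinder_mul PM π hR fun r => abs_subExpAt_le PM π hC r).tsum_sub
    (summable_measureReal_cylinder_mul PM π hR fun r => abs_subExpAt_le PM π' hC r)]
  ring

lemma subExpAt_sub_subExpAt_eq_tsum (PM : PlayMeasure Ac) {π π' : Profile Ac} {l : History Ac}
    (h : ∀ j, ((π j).after l).AgreeBefore R ((π' j).after l)) (hR : IsAntichain (· <+: ·) R)
    {g : Play Ac → ℝ} (hg : Measurable g) {C : ℝ} (hC : ∀ p, |g p| ≤ C) :
    subExpAt PM π g l - subExpAt PM π' g l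
      = ∑' r : R, (PM.μ (π.after l)).real (cylinder r)
          * (subExpAt PM π g (l ++ r) - subExpAt PM π' g (l ++ r)) := by
  have key := integral_sub_integral_eq_tsum PM (π := π.after l) (π' := π'.after l) h hR
    (hg.comp (measurable_prepend l)) fun p => hC _
  simp only [subExpAt_after] at key
  exact key

end Antichains

section Pasting

omit [Fintype ι] [DecidableEq ι] [Nonempty ι] [∀ i, Fintype (Ac i)]
  [∀ i, MeasurableSpace (Ac i)] [∀ i, DiscreteMeasurableSpace (Ac i)]

variable {R : Set (History Ac)} {l₀ : History Ac}

open Classical in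
noncomputable def pasteProfile (R : Set (History Ac)) (l₀ : History Ac) (τ : Profile Ac)
    (η : History Ac → Profile Ac) : Profile Ac := fun j =>
  { act := fun t p => if h : ∃ r ∈ R, l₀ ++ r <+: histOf t p then (η h.choose j).act t p
      else (τ j).act t p
    depends_on_past := fun t p q hpq => by
      simp only [histOf_congr hpq]
      split_ifs
      exacts [(η _ j).depends_on_past t p q hpq, (τ j).depends_on_past t p q hpq] }

omit [∀ i, Nonempty (Ac i)] in
open Classical in
lemma pasteProfile_act (τ : Profile Ac) (η : History Ac → Profile Ac) (j : ι) (t : ℕ)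
    (p : Play Ac) :
    (pasteProfile R l₀ τ η j).act t p = if h : ∃ r ∈ R, l₀ ++ r <+: histOf t p
      then (η h.choose j).act t p else (τ j).act t p :=
  rfl

lemma agreeBefore_pasteProfile (τ : Profile Ac) (η : History Ac → Profile Ac) (j : ι) :
    ((τ j).after l₀).AgreeBefore R ((pasteProfile R l₀ τ η j).after l₀) := fun t q hq => by
  have hnot : ¬ ∃ r ∈ R, l₀ ++ r <+: histOf (l₀.length + t) (prepend l₀ q) := by
    rw [histOf_prepend]
    rintro ⟨r, hr, hpre⟩
    exact hq r hr ((List.prefix_append_right_inj l₀).1 hpre)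
  rw [Strategy.after_act (pasteProfile R l₀ τ η j), pasteProfile_act, dif_neg hnot]
  rfl

lemma pasteProfile_after_append (hR : IsAntichain (· <+: ·) R) {r : History Ac} (hr : r ∈ R)
    (τ : Profile Ac) (η : History Ac → Profile Ac) :
    (pasteProfile R l₀ τ η).after (l₀ ++ r) = (η r).after (l₀ ++ r) := by
  funext j
  refine Strategy.ext (funext fun t => funext fun q => ?_)
  have hpre : l₀ ++ r <+: histOf ((l₀ ++ r).length + t) (prepend (l₀ ++ r) q) := by
    rw [histOf_prepend]
    exact List.prefix_append _ _
  have hex : ∃ r' ∈ R, l₀ ++ r' <+: histOf ((l₀ ++ r).length + t) (prepend (l₀ ++ r) q) :=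
    ⟨r, hr, hpre⟩
  have hchoose : hex.choose = r := by
    obtain ⟨hmem, hpre'⟩ := hex.choose_spec
    rcases List.prefix_or_prefix_of_prefix hpre' hpre with h | h
    · exact hR.eq hmem hr ((List.prefix_append_right_inj l₀).1 h)
    · exact (hR.eq hr hmem ((List.prefix_append_right_inj l₀).1 h)).symm
  rw [Profile.after_apply, Strategy.after_act, pasteProfile_act, dif_pos hex, hchoose]
  rfl

end Pasting

section Guarantees

omit [Nonempty ι] [∀ i, Fintype (Ac i)] [∀ i, DiscreteMeasurableSpace (Ac i)]

variable (PM : PlayMeasure Ac) {g : Play Ac → ℝ} {i : ι}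

variable (g) in
noncomputable def guarantee (σ : Strategy Ac i) (l : History Ac) : ℝ :=
  ⨅ τ : Profile Ac, subExpAt PM (update τ i σ) g l

variable (g i) in
noncomputable def subMaxminAt (l : History Ac) : ℝ := subMaxmin PM g i l.length (toPlay l)

lemma subMaxmin_eq_subMaxminAt_histOf (n : ℕ) (h : Play Ac) :
    subMaxmin PM g i n h = subMaxminAt PM g i (histOf n h) := by
  rw [subMaxminAt, length_histOf]
  exact iSup_congr fun σ => iInf_congr fun τ =>
    subExp_congr PM _ g fun s hs => (toPlay_histOf hs h).symm

lemma guarantee_le_subExpAt {C : ℝ} (hC : ∀ p, |g p| ≤ C) (σ : Strategy Ac i) (τ : Profile Ac)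
    (l : History Ac) : guarantee PM g σ l ≤ subExpAt PM (update τ i σ) g l :=
  ciInf_le ⟨-C, by rintro _ ⟨τ', rfl⟩; exact (abs_le.1 (abs_subExpAt_le PM _ hC l)).1⟩ τ

lemma abs_guarantee_le {C : ℝ} (hC : ∀ p, |g p| ≤ C) (σ : Strategy Ac i) (l : History Ac) :
    |guarantee PM g σ l| ≤ C :=
  abs_le.2 ⟨le_ciInf fun _ => (abs_le.1 (abs_subExpAt_le PM _ hC l)).1,
    (guarantee_le_subExpAt PM hC σ (Classical.arbitrary _) l).trans
      (abs_le.1 (abs_subExpAt_le PM _ hC l)).2⟩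

lemma exists_subExpAt_lt_guarantee_add (σ : Strategy Ac i) (l : History Ac) {ε : ℝ}
    (hε : 0 < ε) : ∃ τ : Profile Ac, subExpAt PM (update τ i σ) g l < guarantee PM g σ l + ε :=
  exists_lt_of_ciInf_lt (lt_add_of_pos_right _ hε)

lemma exists_subMaxminAt_sub_lt_guarantee {ε : ℝ} (hε : 0 < ε) (l : History Ac) :
    ∃ σ : Strategy Ac i, subMaxminAt PM g i l - ε < guarantee PM g σ l :=
  exists_lt_of_lt_ciSup (sub_lt_self _ hε)

end Guarantees

section Stitching

omit [Nonempty ι]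

lemma guarantee_add_min_le_subExpAt (PM : PlayMeasure Ac) {g : Play Ac → ℝ} {i : ι}
    (hg : Measurable g) {C : ℝ} (hC : ∀ p, |g p| ≤ C)
    {σ σ' : Strategy Ac i} {l₀ : History Ac} {R : Set (History Ac)}
    (hR : IsAntichain (· <+: ·) R) (hσ : (σ.after l₀).AgreeBefore R (σ'.after l₀))
    (τ : Profile Ac) {A : ℝ}
    (hA : ∀ r ∈ R, ∃ τ' : Profile Ac,
      A ≤ subExpAt PM (update τ i σ) g (l₀ ++ r) - subExpAt PM (update τ' i σ') g (l₀ ++ r)) :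
    guarantee PM g σ' l₀ + min 0 A ≤ subExpAt PM (update τ i σ) g l₀ := by
  choose! η hη using hA
  set τ' := pasteProfile R l₀ τ η
  have hagree : ∀ j, ((update τ i σ j).after l₀).AgreeBefore R ((update τ' i σ' j).after l₀) := by
    intro j
    rcases eq_or_ne j i with rfl | hj
    · simpa using hσ
    · simpa [hj] using agreeBefore_pasteProfile τ η j
  have hpasted : ∀ r : R, subExpAt PM (update τ' i σ') g (l₀ ++ r)
      = subExpAt PM (update (η r) i σ') g (l₀ ++ r) := fun r => by
    rw [subExpAt_eq_integral, subExpAt_eq_integral, Profile.after_update, Profile.after_update,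
      pasteProfile_after_append hR r.2]
  have hdiff := subExpAt_sub_subExpAt_eq_tsum PM hagree hR hg hC
  simp only [hpasted] at hdiff
  have hmin := min_zero_le_tsum_mul (fun _ => measureReal_nonneg)
    (summable_measureReal_cylinder PM (Profile.after (update τ i σ) l₀) hR)
    (tsum_measureReal_cylinder_le_one PM _ hR) (fun r : R => hη r r.2)
    (summable_measureReal_cylinder_mul PM _ hR (C := C + C) fun r =>
      (abs_sub _ _).trans (add_le_add (abs_subExpAt_le PM _ hC _) (abs_subExpAt_le PM _ hC _)))
  linarith [guarantee_le_subExpAt PM hC σ' τ' l₀]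

end Stitching

section Restarts

omit [Fintype ι] [DecidableEq ι] [Nonempty ι] [∀ i, Fintype (Ac i)] [∀ i, Nonempty (Ac i)]
  [∀ i, MeasurableSpace (Ac i)] [∀ i, DiscreteMeasurableSpace (Ac i)]

variable (restart : History Ac → History Ac → Prop)

open Classical in
/-- `lastRestartRev restart l.reverse` is the last restart point weakly before `l`: starting
from `[]`, a history `m` becomes the new restart point when `restart b m` holds for the
current restart point `b`. -/
noncomputable def lastRestartRev : List (∀ j, Ac j) → History Ac
  | [] => []
  | a :: l =>
    if restart (lastRestartRev l) (a :: l).reverse then (a :: l).reverse else lastRestartRev l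

noncomputable def lastRestart (l : History Ac) : History Ac := lastRestartRev restart l.reverse

@[simp] lemma lastRestart_nil : lastRestart restart ([] : History Ac) = [] := rfl

open Classical in
lemma lastRestart_concat (l : History Ac) (a : ∀ j, Ac j) :
    lastRestart restart (l ++ [a])
      = if restart (lastRestart restart l) (l ++ [a]) then l ++ [a] else lastRestart restart l := by
  simp only [lastRestart, List.reverse_concat, lastRestartRev, List.reverse_cons,
    List.reverse_reverse]
  congr

lemma lastRestart_prefix (l : History Ac) : lastRestart restart l <+: l := by
  induction l using List.reverseRecOn with
  | nil => simp
  | append_singleton l a ih =>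
    rw [lastRestart_concat]
    split_ifs
    exacts [List.prefix_rfl, ih.trans (List.prefix_append l [a])]

lemma lastRestart_concat_eq_self_iff (l : History Ac) (a : ∀ j, Ac j) :
    lastRestart restart (l ++ [a]) = l ++ [a] ↔ restart (lastRestart restart l) (l ++ [a]) := by
  rw [lastRestart_concat]
  split_ifs with h
  · exact iff_of_true rfl h
  · refine iff_of_false (fun heq => ?_) h
    have := congrArg List.length heq ▸ (lastRestart_prefix restart l).length_le
    simp at this

lemma lastRestart_concat_of_ne {l : History Ac} {a : ∀ j, Ac j}
    (h : lastRestart restart (l ++ [a]) ≠ l ++ [a]) :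
    lastRestart restart (l ++ [a]) = lastRestart restart l := by
  rw [lastRestart_concat, if_neg ((lastRestart_concat_eq_self_iff restart l a).not.1 h)]

lemma not_restart_of_lastRestart_ne {l : History Ac} (h : lastRestart restart l ≠ l) :
    ¬ restart (lastRestart restart l) l := by
  obtain rfl | ⟨m, a, rfl⟩ := List.eq_nil_or_concat' l
  · exact absurd (lastRestart_nil restart) h
  · rw [lastRestart_concat_of_ne restart h]
    exact (lastRestart_concat_eq_self_iff restart m a).not.1 h

/-- `r` belongs to `firstRestarts restart l₀` when `l₀ ++ r` is the first restart point
strictly after `l₀`. -/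
def firstRestarts (l₀ : History Ac) : Set (History Ac) :=
  {r | r ≠ [] ∧ lastRestart restart (l₀ ++ r) = l₀ ++ r ∧
    ∀ r', r' <+: r → r' ≠ r → r' ≠ [] → lastRestart restart (l₀ ++ r') ≠ l₀ ++ r'}

lemma isAntichain_firstRestarts (l₀ : History Ac) :
    IsAntichain (· <+: ·) (firstRestarts restart l₀) :=
  fun _ hr _ hr' hne hpre => hr'.2.2 _ hpre hne hr.1 hr.2.1

lemma lastRestart_append_of_ne {l₀ r : History Ac}
    (h : ∀ r', r' <+: r → r' ≠ [] → lastRestart restart (l₀ ++ r') ≠ l₀ ++ r') :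
    lastRestart restart (l₀ ++ r) = lastRestart restart l₀ := by
  induction r using List.reverseRecOn with
  | nil => simp
  | append_singleton r a ih =>
    rw [← List.append_assoc, lastRestart_concat_of_ne restart (by
      simpa using h (r ++ [a]) List.prefix_rfl (by simp))]
    exact ih fun r' hr' => h r' (hr'.trans (List.prefix_append r [a]))

lemma lastRestart_ne_of_forall_not_prefix {l₀ r : History Ac}
    (h : ∀ r' ∈ firstRestarts restart l₀, ¬ r' <+: r) :
    ∀ r', r' <+: r → r' ≠ [] → lastRestart restart (l₀ ++ r') ≠ l₀ ++ r' := by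
  induction r using List.reverseRecOn with
  | nil => exact fun r' hr' hne => absurd (List.prefix_nil.1 hr') hne
  | append_singleton r a ih =>
    have ih := ih fun r' hr' hpre => h r' hr' (hpre.trans (List.prefix_append r [a]))
    intro r' hr' hne heq
    rcases List.prefix_concat_iff.1 hr' with rfl | hr'
    · refine h _ ⟨hne, heq, fun r'' hr'' hne'' => ?_⟩ List.prefix_rfl
      exact ih r'' ((List.prefix_concat_iff.1 hr'').resolve_left hne'')
    · exact ih r' hr' hne heq

lemma lastRestart_append {l₀ r : History Ac} (h : ∀ r' ∈ firstRestarts restart l₀, ¬ r' <+: r) :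
    lastRestart restart (l₀ ++ r) = lastRestart restart l₀ :=
  lastRestart_append_of_ne restart (lastRestart_ne_of_forall_not_prefix restart h)

lemma restart_of_mem_firstRestarts {l₀ r : History Ac} (hr : r ∈ firstRestarts restart l₀) :
    restart (lastRestart restart l₀) (l₀ ++ r) := by
  obtain ⟨r, a, rfl⟩ := (List.eq_nil_or_concat' r).resolve_left hr.1
  have hbefore : lastRestart restart (l₀ ++ r) = lastRestart restart l₀ :=
    lastRestart_append_of_ne restart fun r' hr' hne => hr.2.2 r'
      (hr'.trans (List.prefix_append r [a])) (fun h => by simpa [h] using hr'.length_le) hne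
  have := hr.2.1
  rw [← List.append_assoc, lastRestart_concat_eq_self_iff, hbefore] at this
  rwa [← List.append_assoc]

variable {i : ι}

noncomputable def restartStrategy (ρ : History Ac → Strategy Ac i) : Strategy Ac i where
  act t p := (ρ (lastRestart restart (histOf t p))).act t p
  depends_on_past t p q hpq := by
    rw [histOf_congr hpq]
    exact (ρ _).depends_on_past t p q hpq

omit [∀ i, Nonempty (Ac i)] in
lemma restartStrategy_after_agreeBefore [∀ i, Nonempty (Ac i)] (ρ : History Ac → Strategy Ac i)
    (l₀ : History Ac) :
    ((restartStrategy restart ρ).after l₀).AgreeBefore (firstRestarts restart l₀)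
      ((ρ (lastRestart restart l₀)).after l₀) := fun t q hq => by
  rw [Strategy.after_act, Strategy.after_act]
  show (ρ (lastRestart restart (histOf (l₀.length + t) (prepend l₀ q)))).act _ _ = _
  rw [histOf_prepend, lastRestart_append restart hq]

end Restarts

section RestartArgument

omit [Nonempty ι]

variable (PM : PlayMeasure Ac) {g : Play Ac → ℝ} {i : ι} {ρ : History Ac → Strategy Ac i} {ε : ℝ}

variable (g ρ ε) in
def Underperforms (b l : History Ac) : Prop :=
  guarantee PM g (ρ b) l < subMaxminAt PM g i l - 2 * ε

omit [∀ i, Fintype (Ac i)] [∀ i, DiscreteMeasurableSpace (Ac i)] in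
lemma subMaxminAt_sub_le_guarantee_lastRestart (hε : 0 ≤ ε)
    (hρ : ∀ l, subMaxminAt PM g i l - ε < guarantee PM g (ρ l) l) (l : History Ac) :
    subMaxminAt PM g i l - 2 * ε
      ≤ guarantee PM g (ρ (lastRestart (Underperforms PM g ρ ε) l)) l := by
  by_cases h : lastRestart (Underperforms PM g ρ ε) l = l
  · rw [h]
    linarith [hρ l]
  · exact not_lt.1 (not_restart_of_lastRestart_ne _ h)

lemma guarantee_lastRestart_add_min_le (hg : Measurable g) {C : ℝ} (hC : ∀ p, |g p| ≤ C)
    (hε : 0 < ε) (hρ : ∀ l, subMaxminAt PM g i l - ε < guarantee PM g (ρ l) l) {G : ℝ}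
    (hG : ∀ l, guarantee PM g (ρ (lastRestart (Underperforms PM g ρ ε) l)) l + G
      ≤ guarantee PM g (restartStrategy (Underperforms PM g ρ ε) ρ) l)
    (l₀ : History Ac) :
    guarantee PM g (ρ (lastRestart (Underperforms PM g ρ ε) l₀)) l₀ + min 0 (G + ε / 2)
      ≤ guarantee PM g (restartStrategy (Underperforms PM g ρ ε) ρ) l₀ := by
  set restart := Underperforms PM g ρ ε
  set b := lastRestart restart l₀
  refine le_ciInf fun τ => guarantee_add_min_le_subExpAt PM hg hC
    (isAntichain_firstRestarts restart l₀) (restartStrategy_after_agreeBefore restart ρ l₀) τ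
    fun r hr => ?_
  obtain ⟨τ', hτ'⟩ := exists_subExpAt_lt_guarantee_add PM (g := g) (ρ b) (l₀ ++ r) (half_pos hε)
  refine ⟨τ', ?_⟩
  have hfresh := hG (l₀ ++ r)
  rw [hr.2.1] at hfresh
  have hunder : guarantee PM g (ρ b) (l₀ ++ r) < subMaxminAt PM g i (l₀ ++ r) - 2 * ε :=
    restart_of_mem_firstRestarts restart hr
  linarith [hρ (l₀ ++ r), guarantee_le_subExpAt PM hC (restartStrategy restart ρ) τ (l₀ ++ r)]

lemma guarantee_lastRestart_le_guarantee_restartStrategy (hg : Measurable g) {C : ℝ}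
    (hC : ∀ p, |g p| ≤ C) (hε : 0 < ε)
    (hρ : ∀ l, subMaxminAt PM g i l - ε < guarantee PM g (ρ l) l) (l : History Ac) :
    guarantee PM g (ρ (lastRestart (Underperforms PM g ρ ε) l)) l
      ≤ guarantee PM g (restartStrategy (Underperforms PM g ρ ε) ρ) l := by
  set restart := Underperforms PM g ρ ε
  set σ := restartStrategy restart ρ
  set gap : History Ac → ℝ := fun l =>
    guarantee PM g σ l - guarantee PM g (ρ (lastRestart restart l)) l
  have hbdd : BddBelow (range gap) := ⟨-(C + C), by
    rintro _ ⟨l, rfl⟩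
    linarith [abs_le.1 (abs_guarantee_le PM hC σ l),
      abs_le.1 (abs_guarantee_le PM hC (ρ (lastRestart restart l)) l)]⟩
  set G := ⨅ l, gap l
  have hstep : ∀ l, min 0 (G + ε / 2) ≤ gap l := fun l => by
    have := guarantee_lastRestart_add_min_le PM hg hC hε hρ (G := G)
      (fun l => by linarith [ciInf_le hbdd l]) l
    linarith
  have hG : 0 ≤ G := by
    have := le_ciInf hstep
    rcases min_cases 0 (G + ε / 2) with ⟨h, -⟩ | ⟨h, -⟩ <;> rw [h] at this <;> linarith
  linarith [ciInf_le hbdd l]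

end RestartArgument

/-- Every player has a subgame-perfect `δ`-maxmin strategy: a strategy that,
in every subgame and against every strategy profile of the opponents, yields her at least
her maxmin value in that subgame minus `δ`. -/
theorem exists_subgame_perfect_maxmin (PM : PlayMeasure Ac) (f : ι → Play Ac → ℝ)
    (hbdd : ∀ j, BddPayoff (f j)) (hmeas : ∀ j, Measurable (f j))
    (i : ι) (δ : ℝ) (hδ : 0 < δ) :
    ∃ σi : Strategy Ac i, ∀ (τ : Profile Ac) (n : ℕ) (h : Play Ac),
      subMaxmin PM (f i) i n h - δ ≤ subExp PM (Function.update τ i σi) (f i) n h := by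
  obtain ⟨C, hC⟩ := hbdd i
  have hε : 0 < δ / 2 := half_pos hδ
  choose ρ hρ using exists_subMaxminAt_sub_lt_guarantee PM (g := f i) (i := i) hε
  set restart := Underperforms PM (f i) ρ (δ / 2)
  refine ⟨restartStrategy restart ρ, fun τ n h => ?_⟩
  rw [subMaxmin_eq_subMaxminAt_histOf, subExp_eq_subExpAt_histOf]
  calc subMaxminAt PM (f i) i (histOf n h) - δ
      = subMaxminAt PM (f i) i (histOf n h) - 2 * (δ / 2) := by ring
    _ ≤ guarantee PM (f i) (ρ (lastRestart restart (histOf n h))) (histOf n h) :=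
      subMaxminAt_sub_le_guarantee_lastRestart PM hε.le hρ _
    _ ≤ guarantee PM (f i) (restartStrategy restart ρ) (histOf n h) :=
      guarantee_lastRestart_le_guarantee_restartStrategy PM (hmeas i) hC hε hρ _
    _ ≤ subExpAt PM (update τ i (restartStrategy restart ρ)) (f i) (histOf n h) :=
      guarantee_le_subExpAt PM hC _ τ _

end Blackwell
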